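/- Let A be a self-adjoint operator in ℋ, p ∈ ℕ, and B ∈ C_{p−1}(A) a Hermitian (bounded self-adjoint) operator; then A + B, with domain Dom(A), is self-adjoint. An operator-valued function X(t) ∈ B(ℋ), t ∈ ℝ, is in C_p(A) uniformly if and only if X(t) is in C_p(A+B) uniformly. -/

import Mathlib

open scoped ComplexOrder
open Classical

variable {ℋ : Type*} [NormedAddCommGroup ℋ] [InnerProductSpace ℂ ℋ] [CompleteSpace ℋ]

/-- The everywhere-defined extension (by `0` outside the domain) of an unbounded operator
`Aop` with domain the submodule `D`. -/
noncomputable def Aext (D : Submodule ℂ ℋ) (Aop : ↥D →ₗ[ℂ] ℋ) (ψ : ℋ) : ℋ :=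
  if h : ψ ∈ D then Aop ⟨ψ, h⟩ else 0

/-- `Dom(A^n)`: the set of vectors to which `A` can be applied `n` times. -/
def domPow (D : Submodule ℂ ℋ) (Aop : ↥D →ₗ[ℂ] ℋ) (n : ℕ) : Set ℋ :=
  {ψ : ℋ | ∀ k, k < n → (Aext D Aop)^[k] ψ ∈ D}

/-- The sesquilinear form `α_n(ξ,η) = Σ_{k=0}^{n} C(n,k)(−1)^k ⟨X A^k ξ, A^{n−k} η⟩`,
defined (meaningfully) on `Dom(A^n)`. -/
noncomputable def commForm (D : Submodule ℂ ℋ) (Aop : ↥D →ₗ[ℂ] ℋ)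
    (X : ℋ →L[ℂ] ℋ) (n : ℕ) (ξ η : ℋ) : ℂ :=
  ∑ k ∈ Finset.range (n + 1),
    (n.choose k : ℂ) * (-1) ^ k *
      (inner ℂ (X ((Aext D Aop)^[k] ξ)) ((Aext D Aop)^[n - k] η) : ℂ)

/-- `ad_A^n X` exists in `B(ℋ)` and equals the bounded operator `Z`: the form `α_n` is
represented by `Z` on `Dom(A^n)`. -/
def AdExistsN (D : Submodule ℂ ℋ) (Aop : ↥D →ₗ[ℂ] ℋ) (n : ℕ) (X Z : ℋ →L[ℂ] ℋ) : Prop :=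
  ∀ ξ ∈ domPow D Aop n, ∀ η ∈ domPow D Aop n,
    commForm D Aop X n ξ η = (inner ℂ (Z ξ) η : ℂ)

/-- `X ∈ C_n(A)`: the multiple commutators `ad_A^k X` exist in `B(ℋ)` for `k = 0,…,n`. -/
def InCn (D : Submodule ℂ ℋ) (Aop : ↥D →ₗ[ℂ] ℋ) (n : ℕ) (X : ℋ →L[ℂ] ℋ) : Prop :=
  ∀ k, k ≤ n → ∃ Z : ℋ →L[ℂ] ℋ, AdExistsN D Aop k X Z

/-- Self-adjointness of the (in general unbounded) operator `Aop` with domain `D`: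
it is densely defined, symmetric, and its domain is maximal. -/
def IsSelfAdjointOp (D : Submodule ℂ ℋ) (Aop : ↥D →ₗ[ℂ] ℋ) : Prop :=
  Dense (D : Set ℋ) ∧
    (∀ u v : ↥D, (inner ℂ (Aop u) (v : ℋ) : ℂ) = inner ℂ (u : ℋ) (Aop v)) ∧
    ∀ v w : ℋ, (∀ u : ↥D, (inner ℂ (Aop u) v : ℂ) = inner ℂ (u : ℋ) w) → v ∈ D


/-- An operator-valued function `X(t)` is in `C_n(A)` uniformly:
`X(t) ∈ C_n(A)` for all `t` and `sup_t Σ_{k≤n} ‖ad_A^k X(t)‖ < ∞`. -/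
def InCnUniform (D : Submodule ℂ ℋ) (Aop : ↥D →ₗ[ℂ] ℋ) (n : ℕ)
    (X : ℝ → ℋ →L[ℂ] ℋ) : Prop :=
  ∃ c : ℝ, ∀ t : ℝ, ∀ k, k ≤ n → ∃ Z : ℋ →L[ℂ] ℋ, AdExistsN D Aop k (X t) Z ∧ ‖Z‖ ≤ c

open Filter Topology

/-!
Read `ad_A^k X` in the strong sense: call `c : ℕ → B(ℋ)` a commutator chain of length `n` if each
`c k`, `k < n`, maps `Dom A` into itself and `A c_k - c_k A = c_{k+1}` on `Dom A`. For a chain the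
forms `α_k` are represented by `c k` (Pascal's rule). Conversely, if `α_k` and `α_{k+1}` are
represented by `Z` and `Z'`, then `⟪Z' ξ, η⟫ = ⟪Z ξ, A η⟫ - ⟪Z A ξ, η⟫` holds on `Dom(A^{k+1})`, hence
on all of `Dom A` because `Dom(A^{k+1})` is a core for `A` (it contains `J_t^k ξ`, where
`J_t = i t (A + i t)⁻¹ → 1` strongly), and maximality of `Dom A` turns this into `A Z - Z A = Z'`.
So `X ∈ C_n(A)` uniformly iff `X(t)` has chains of length `n` that are bounded uniformly in `t`.

Since `ad_{A+B} = ad_A + [B, ·]` and `ad_A^j [B, Y]` expands by the Leibniz rule, an `(A+B)`-chain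
of `X` is obtained from its `A`-chain and that of `B` by a fixed noncommutative polynomial, linear
in the chain of `X` and using `ad_A^i B` only for `i < p`; so uniform bounds carry over. The converse
is the same statement for `A = (A + B) + (-B)`, once the construction has given `B ∈ C_{p-1}(A+B)`.
-/

section Domain

omit [CompleteSpace ℋ]

variable {D : Submodule ℂ ℋ} {A : ↥D →ₗ[ℂ] ℋ}

lemma Aext_of_mem {ψ : ℋ} (h : ψ ∈ D) : Aext D A ψ = A ⟨ψ, h⟩ := dif_pos h

lemma Aext_coe (u : ↥D) : Aext D A u = A u := Aext_of_mem u.2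

lemma Aext_add {x y : ℋ} (hx : x ∈ D) (hy : y ∈ D) :
    Aext D A (x + y) = Aext D A x + Aext D A y := by
  rw [Aext_of_mem hx, Aext_of_mem hy, Aext_of_mem (D.add_mem hx hy), ← map_add]
  rfl

lemma Aext_smul (c : ℂ) {x : ℋ} (hx : x ∈ D) : Aext D A (c • x) = c • Aext D A x := by
  rw [Aext_of_mem hx, Aext_of_mem (D.smul_mem c hx), ← map_smul]
  rfl

lemma Aext_neg {x : ℋ} (hx : x ∈ D) : Aext D A (-x) = -Aext D A x := by
  simpa using Aext_smul (A := A) (-1) hx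

lemma Aext_nsmul (n : ℕ) {x : ℋ} (hx : x ∈ D) : Aext D A (n • x) = n • Aext D A x := by
  simpa only [Nat.cast_smul_eq_nsmul] using Aext_smul (A := A) (n : ℂ) hx

lemma Aext_sum {ι : Type*} (s : Finset ι) {f : ι → ℋ} (hf : ∀ i ∈ s, f i ∈ D) :
    Aext D A (∑ i ∈ s, f i) = ∑ i ∈ s, Aext D A (f i) := by
  induction s using Finset.cons_induction with
  | empty => simpa using Aext_smul (A := A) 0 D.zero_mem
  | cons a s ha ih =>
    rw [Finset.forall_mem_cons] at hf
    rw [Finset.sum_cons, Finset.sum_cons, Aext_add hf.1 (D.sum_mem hf.2), ih hf.2]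

lemma Aext_add_comp_subtype {B : ℋ →L[ℂ] ℋ} {ξ : ℋ} (hξ : ξ ∈ D) :
    Aext D (A + B.toLinearMap.comp D.subtype) ξ = Aext D A ξ + B ξ := by
  rw [Aext_of_mem hξ, Aext_of_mem hξ]
  rfl

lemma mem_domPow_zero (ψ : ℋ) : ψ ∈ domPow D A 0 := fun k hk => absurd hk k.not_lt_zero

lemma mem_domPow_succ_iff {n : ℕ} {ψ : ℋ} :
    ψ ∈ domPow D A (n + 1) ↔ ψ ∈ D ∧ Aext D A ψ ∈ domPow D A n := by
  simp only [domPow, Set.mem_ofPred_eq, Nat.forall_lt_succ_left, Function.iterate_zero_apply,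
    Function.iterate_succ_apply]

lemma domPow_mono {m n : ℕ} (h : m ≤ n) : domPow D A n ⊆ domPow D A m :=
  fun _ hψ k hk => hψ k (hk.trans_le h)

lemma map_mem_domPow_succ {J : ℋ →L[ℂ] ℋ} (hJD : ∀ y, J y ∈ D)
    (hJA : ∀ ξ ∈ D, Aext D A (J ξ) = J (Aext D A ξ)) {j : ℕ} :
    ∀ {ψ : ℋ}, ψ ∈ domPow D A j → J ψ ∈ domPow D A (j + 1) := by
  induction j with
  | zero => intro ψ _; exact mem_domPow_succ_iff.mpr ⟨hJD ψ, mem_domPow_zero _⟩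
  | succ j ih =>
    intro ψ hψ
    obtain ⟨hψD, hAψ⟩ := mem_domPow_succ_iff.mp hψ
    exact mem_domPow_succ_iff.mpr ⟨hJD ψ, hJA ψ hψD ▸ ih hAψ⟩

lemma iterate_mem_domPow {J : ℋ →L[ℂ] ℋ} (hJD : ∀ y, J y ∈ D)
    (hJA : ∀ ξ ∈ D, Aext D A (J ξ) = J (Aext D A ξ)) (k : ℕ) {ξ : ℋ} (hξ : ξ ∈ D) :
    (⇑J)^[k] ξ ∈ domPow D A (k + 1) ∧ Aext D A ((⇑J)^[k] ξ) = (⇑J)^[k] (Aext D A ξ) := by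
  induction k with
  | zero => exact ⟨mem_domPow_succ_iff.mpr ⟨hξ, mem_domPow_zero _⟩, rfl⟩
  | succ k ih =>
    rw [Function.iterate_succ_apply', Function.iterate_succ_apply']
    exact ⟨map_mem_domPow_succ hJD hJA ih.1,
      by rw [hJA _ (mem_domPow_succ_iff.mp ih.1).1, ih.2]⟩

lemma commForm_zero (X : ℋ →L[ℂ] ℋ) (ξ η : ℋ) :
    commForm D A X 0 ξ η = inner ℂ (X ξ) η := by
  simp [commForm]

lemma commForm_succ (X : ℋ →L[ℂ] ℋ) (n : ℕ) (ξ η : ℋ) :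
    commForm D A X (n + 1) ξ η =
      commForm D A X n ξ (Aext D A η) - commForm D A X n (Aext D A ξ) η := by
  set T := Aext D A
  have h := Finset.sum_choose_succ_nsmul
    (fun i j => (-1 : ℂ) ^ i * inner ℂ (X (T^[i] ξ)) (T^[j] η)) n
  simp only [nsmul_eq_mul, ← mul_assoc] at h
  rw [commForm, h, commForm, commForm, sub_eq_add_neg, ← Finset.sum_neg_distrib]
  congr 1 <;> refine Finset.sum_congr rfl fun k hk => ?_
  · rw [← Function.iterate_succ_apply, Nat.succ_eq_add_one,
      Nat.sub_add_comm (Finset.mem_range_succ_iff.mp hk)]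
  · rw [Function.iterate_succ_apply, pow_succ]
    ring

end Domain

section Leibniz

variable {R : Type*}

def leibnizProd [Semiring R] (a b : ℕ → R) (j : ℕ) : R :=
  ∑ i ∈ Finset.range (j + 1), j.choose i • (a i * b (j - i))

lemma leibnizProd_zero [Semiring R] (a b : ℕ → R) : leibnizProd a b 0 = a 0 * b 0 := by
  simp [leibnizProd]

lemma norm_leibnizProd_le [SeminormedRing R] {a b : ℕ → R} {α β : ℝ} {j : ℕ}
    (ha : ∀ i ≤ j, ‖a i‖ ≤ α) (hb : ∀ i ≤ j, ‖b i‖ ≤ β) :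
    ‖leibnizProd a b j‖ ≤ 2 ^ j * (α * β) := by
  have hα : 0 ≤ α := (norm_nonneg _).trans (ha 0 j.zero_le)
  have hterm : ∀ i ∈ Finset.range (j + 1), ‖j.choose i • (a i * b (j - i))‖ ≤ j.choose i * (α * β) :=
    fun i hi => norm_nsmul_le.trans <| mul_le_mul_of_nonneg_left
      ((norm_mul_le _ _).trans (mul_le_mul (ha i (Finset.mem_range_succ_iff.mp hi))
        (hb _ (j.sub_le i)) (norm_nonneg _) hα)) (Nat.cast_nonneg _)
  calc ‖leibnizProd a b j‖ ≤ ∑ i ∈ Finset.range (j + 1), (j.choose i : ℝ) * (α * β) :=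
        (norm_sum_le _ _).trans (Finset.sum_le_sum hterm)
    _ = 2 ^ j * (α * β) := by
        rw [← Finset.sum_mul, ← Nat.cast_sum, Nat.sum_range_choose, Nat.cast_pow, Nat.cast_ofNat]

/-- With `b k = ad_A^k B` and `c j = ad_A^j X`, `perturbChain b c k j` is `ad_A^j ad_{A+B}^k X`:
`ad_{A+B} = ad_A + [B, ·]`, and `ad_A^j [B, Y]` is expanded by the Leibniz rule. -/
def perturbChain [Ring R] (b c : ℕ → R) : ℕ → ℕ → R
  | 0 => c
  | k + 1 => fun j => perturbChain b c k (j + 1) + leibnizProd b (perturbChain b c k) j -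
      leibnizProd (perturbChain b c k) b j

lemma norm_perturbChain_le [SeminormedRing R] {b c : ℕ → R} {n : ℕ} {β M : ℝ}
    (hb : ∀ i ≤ n, ‖b i‖ ≤ β) (hc : ∀ j ≤ n, ‖c j‖ ≤ M) :
    ∀ k ≤ n, ∀ j ≤ n - k, ‖perturbChain b c k j‖ ≤ M * (1 + 2 ^ (n + 1) * β) ^ k := by
  have hβ : 0 ≤ β := (norm_nonneg _).trans (hb 0 n.zero_le)
  intro k
  induction k with
  | zero => simpa [perturbChain] using hc
  | succ k ih =>
    intro hk j hj
    set P := perturbChain b c k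
    set L := 1 + 2 ^ (n + 1) * β with hL_def
    have hP : ∀ i ≤ j + 1, ‖P i‖ ≤ M * L ^ k := fun i hi => ih (k.le_succ.trans hk) i (by omega)
    have hML : 0 ≤ M * L ^ k := (norm_nonneg _).trans (hP 0 j.succ.zero_le)
    have hL : 1 + 2 * 2 ^ j * β ≤ L := by
      have : (2 : ℝ) ^ j ≤ 2 ^ n := pow_le_pow_right₀ one_le_two (by omega)
      rw [hL_def, pow_succ']
      gcongr
    have h₁ := norm_leibnizProd_le (j := j) (fun i hi => hb i (by omega))
      (fun i hi => hP i (by omega))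
    have h₂ := norm_leibnizProd_le (j := j) (fun i hi => hP i (by omega))
      (fun i hi => hb i (by omega))
    calc ‖perturbChain b c (k + 1) j‖
        ≤ ‖P (j + 1)‖ + ‖leibnizProd b P j‖ + ‖leibnizProd P b j‖ := norm_sub_le_of_le
          (norm_add_le _ _) le_rfl
      _ ≤ M * L ^ k * (1 + 2 * 2 ^ j * β) := by linarith [hP (j + 1) le_rfl]
      _ ≤ M * L ^ k * L := mul_le_mul_of_nonneg_left hL hML
      _ = M * L ^ (k + 1) := by ring

end Leibniz

section Chains

omit [CompleteSpace ℋ]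

variable {D : Submodule ℂ ℋ} {A : ↥D →ₗ[ℂ] ℋ}

def IsSymmetricOp (D : Submodule ℂ ℋ) (A : ↥D →ₗ[ℂ] ℋ) : Prop :=
  ∀ u v : ↥D, inner ℂ (A u) (v : ℋ) = inner ℂ (u : ℋ) (A v)

lemma IsSymmetricOp.inner_Aext (hA : IsSymmetricOp D A) {x y : ℋ} (hx : x ∈ D) (hy : y ∈ D) :
    inner ℂ (Aext D A x) y = inner ℂ x (Aext D A y) := by
  rw [Aext_of_mem hx, Aext_of_mem hy]
  exact hA ⟨x, hx⟩ ⟨y, hy⟩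

/-- `c k = ad_A^k (c 0)` for `k ≤ n` in the strong sense: each `c k`, `k < n`, maps `Dom A` into
itself and `A c_k - c_k A = c_{k+1}` there. -/
def IsCommChain (D : Submodule ℂ ℋ) (A : ↥D →ₗ[ℂ] ℋ) (n : ℕ) (c : ℕ → ℋ →L[ℂ] ℋ) : Prop :=
  ∀ k < n, ∀ ξ ∈ D, c k ξ ∈ D ∧ Aext D A (c k ξ) = c (k + 1) ξ + c k (Aext D A ξ)

lemma IsCommChain.adExistsN (hA : IsSymmetricOp D A) {n : ℕ} {c : ℕ → ℋ →L[ℂ] ℋ}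
    (hc : IsCommChain D A n c) : ∀ k ≤ n, AdExistsN D A k (c 0) (c k) := by
  intro k
  induction k with
  | zero => exact fun _ ξ _ η _ => commForm_zero _ _ _
  | succ k ih =>
    intro hk ξ hξ η hη
    obtain ⟨hξD, hAξ⟩ := mem_domPow_succ_iff.mp hξ
    obtain ⟨hηD, hAη⟩ := mem_domPow_succ_iff.mp hη
    obtain ⟨hcD, hcA⟩ := hc k hk ξ hξD
    have hk' := k.le_succ.trans hk
    rw [commForm_succ, ih hk' ξ (domPow_mono k.le_succ hξ) _ hAη,
      ih hk' _ hAξ η (domPow_mono k.le_succ hη), ← hA.inner_Aext hcD hηD, hcA,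
      inner_add_left, add_sub_cancel_right]

lemma adExistsN_zero {X Z : ℋ →L[ℂ] ℋ} (h : AdExistsN D A 0 X Z) : Z = X :=
  ContinuousLinearMap.ext fun ξ => ext_inner_right ℂ fun η => by
    rw [← h ξ (mem_domPow_zero ξ) η (mem_domPow_zero η), commForm_zero]

end Chains

section ChainAlgebra

omit [CompleteSpace ℋ]

variable {D : Submodule ℂ ℋ} {A A₁ A₂ : ↥D →ₗ[ℂ] ℋ} {n : ℕ} {b c c₁ c₂ : ℕ → ℋ →L[ℂ] ℋ}

lemma IsCommChain.mono {m : ℕ} (hc : IsCommChain D A n c) (h : m ≤ n) : IsCommChain D A m c :=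
  fun k hk => hc k (hk.trans_le h)

lemma IsCommChain.shift (hc : IsCommChain D A n c) :
    IsCommChain D A (n - 1) (fun j => c (j + 1)) :=
  fun k hk => hc (k + 1) (by omega)

lemma IsCommChain.add (h₁ : IsCommChain D A n c₁) (h₂ : IsCommChain D A n c₂) :
    IsCommChain D A n (fun k => c₁ k + c₂ k) := by
  intro k hk ξ hξ
  obtain ⟨hD₁, hA₁⟩ := h₁ k hk ξ hξ
  obtain ⟨hD₂, hA₂⟩ := h₂ k hk ξ hξ
  refine ⟨D.add_mem hD₁ hD₂, ?_⟩
  simp only [add_apply]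
  rw [Aext_add hD₁ hD₂, hA₁, hA₂]
  abel

lemma IsCommChain.neg (hc : IsCommChain D A n c) : IsCommChain D A n (fun k => -c k) := by
  intro k hk ξ hξ
  obtain ⟨hD, hA⟩ := hc k hk ξ hξ
  refine ⟨D.neg_mem hD, ?_⟩
  simp only [neg_apply]
  rw [Aext_neg hD, hA, neg_add]

lemma IsCommChain.sub (h₁ : IsCommChain D A n c₁) (h₂ : IsCommChain D A n c₂) :
    IsCommChain D A n (fun k => c₁ k - c₂ k) := by
  simpa only [sub_eq_add_neg] using h₁.add h₂.neg

lemma IsCommChain.leibnizProd (h₁ : IsCommChain D A n c₁) (h₂ : IsCommChain D A n c₂) :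
    IsCommChain D A n (leibnizProd c₁ c₂) := by
  intro j hj ξ hξ
  have hmem : ∀ i ∈ Finset.range (j + 1), c₂ (j - i) ξ ∈ D ∧ c₁ i (c₂ (j - i) ξ) ∈ D := by
    intro i hi
    have hi := Finset.mem_range_succ_iff.mp hi
    have h := (h₂ (j - i) (by omega) ξ hξ).1
    exact ⟨h, (h₁ i (by omega) _ h).1⟩
  have hterm : ∀ i ∈ Finset.range (j + 1), Aext D A (j.choose i • c₁ i (c₂ (j - i) ξ)) =
      j.choose i • c₁ (i + 1) (c₂ (j - i) ξ) + j.choose i • c₁ i (c₂ (j + 1 - i) ξ) +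
        j.choose i • c₁ i (c₂ (j - i) (Aext D A ξ)) := by
    intro i hi
    have hi' := Finset.mem_range_succ_iff.mp hi
    rw [Aext_nsmul _ (hmem i hi).2, (h₁ i (by omega) _ (hmem i hi).1).2,
      (h₂ (j - i) (by omega) ξ hξ).2, map_add, show j - i + 1 = j + 1 - i by omega]
    simp only [smul_add]
    abel
  simp only [_root_.leibnizProd, sum_apply, smul_apply, mul_apply_eq_comp]
  refine ⟨D.sum_mem fun i hi => D.nsmul_mem (hmem i hi).2 _, ?_⟩
  rw [Aext_sum _ fun i hi => D.nsmul_mem (hmem i hi).2 _, Finset.sum_congr rfl hterm,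
    Finset.sum_add_distrib, Finset.sum_add_distrib,
    Finset.sum_choose_succ_nsmul (fun i l => c₁ i (c₂ l ξ)) j]
  abel

lemma IsCommChain.perturbChain (hb : IsCommChain D A (n - 1) b) (hc : IsCommChain D A n c)
    (k : ℕ) : IsCommChain D A (n - k) (perturbChain b c k) := by
  induction k with
  | zero => exact hc
  | succ k ih =>
    have hb' : IsCommChain D A (n - (k + 1)) b := hb.mono (by omega)
    have ih' := ih.mono (m := n - (k + 1)) (by omega)
    exact ((ih.shift.mono (by omega)).add (hb'.leibnizProd ih')).sub (ih'.leibnizProd hb')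

lemma isCommChain_perturbChain (hrel : ∀ ξ ∈ D, Aext D A₂ ξ = Aext D A₁ ξ + b 0 ξ)
    (hb : IsCommChain D A₁ (n - 1) b) (hc : IsCommChain D A₁ n c) :
    IsCommChain D A₂ n (fun k => perturbChain b c k 0) := by
  intro k hk ξ hξ
  obtain ⟨hD, hA⟩ := hb.perturbChain hc k 0 (by omega) ξ hξ
  refine ⟨hD, ?_⟩
  simp only [perturbChain, leibnizProd_zero, sub_apply, add_apply, mul_apply_eq_comp]
  rw [hrel _ hD, hA, hrel ξ hξ, map_add]
  abel

end ChainAlgebra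

section SelfAdjoint

omit [CompleteSpace ℋ]

variable {D : Submodule ℂ ℋ} {A : ↥D →ₗ[ℂ] ℋ}

lemma IsSelfAdjointOp.isSymmetricOp (hA : IsSelfAdjointOp D A) : IsSymmetricOp D A := hA.2.1

lemma IsSelfAdjointOp.mem_and_Aext_eq (hA : IsSelfAdjointOp D A) {v w : ℋ}
    (h : ∀ u : ↥D, inner ℂ (A u) v = inner ℂ (u : ℋ) w) : v ∈ D ∧ Aext D A v = w := by
  have hv : v ∈ D := hA.2.2 v w h
  refine ⟨hv, hA.1.eq_of_inner_right ℂ fun u hu => ?_⟩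
  rw [← hA.isSymmetricOp.inner_Aext hu hv, Aext_of_mem hu, h ⟨u, hu⟩]

lemma IsSelfAdjointOp.commutator_eq_of_inner (hA : IsSelfAdjointOp D A) {X Z : ℋ →L[ℂ] ℋ}
    (h : ∀ ξ ∈ D, ∀ η ∈ D,
      inner ℂ (Z ξ) η = inner ℂ (X ξ) (Aext D A η) - inner ℂ (X (Aext D A ξ)) η) :
    ∀ ξ ∈ D, X ξ ∈ D ∧ Aext D A (X ξ) = Z ξ + X (Aext D A ξ) := by
  intro ξ hξ
  refine hA.mem_and_Aext_eq fun u => ?_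
  have hu := eq_sub_iff_add_eq.mp (h ξ hξ u u.2)
  rw [← Aext_coe, ← inner_conj_symm, ← hu, map_add, inner_conj_symm, inner_conj_symm,
    inner_add_right]

lemma IsSelfAdjointOp.mem_and_Aext_eq_of_tendsto (hA : IsSelfAdjointOp D A) {u : ℕ → ℋ}
    (hu : ∀ m, u m ∈ D) {x w : ℋ} (hx : Tendsto u atTop (𝓝 x))
    (hw : Tendsto (fun m => Aext D A (u m)) atTop (𝓝 w)) : x ∈ D ∧ Aext D A x = w :=
  hA.mem_and_Aext_eq fun v => tendsto_nhds_unique (tendsto_const_nhds.inner hx) <|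
    (tendsto_const_nhds.inner hw).congr fun m => by
      rw [← hA.isSymmetricOp.inner_Aext v.2 (hu m), Aext_coe]

def shiftOp (A : ↥D →ₗ[ℂ] ℋ) (t : ℝ) : ↥D →ₗ[ℂ] ℋ := A + ((t : ℂ) * Complex.I) • D.subtype

lemma shiftOp_apply (t : ℝ) (u : ↥D) :
    shiftOp A t u = A u + ((t : ℂ) * Complex.I) • (u : ℋ) := rfl

lemma IsSymmetricOp.norm_shiftOp_sq (hA : IsSymmetricOp D A) (t : ℝ) (u : ↥D) :
    ‖shiftOp A t u‖ ^ 2 = ‖A u‖ ^ 2 + (t * ‖(u : ℋ)‖) ^ 2 := by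
  have hreal : (inner ℂ (A u) (u : ℋ)).im = 0 := by
    rw [← Complex.conj_eq_iff_im, inner_conj_symm]
    exact (hA u u).symm
  have hcross : RCLike.re ((t : ℂ) * Complex.I * inner ℂ (A u) (u : ℋ)) = 0 := by
    simp [hreal]
  rw [shiftOp_apply, @norm_add_sq ℂ, inner_smul_right, norm_smul, hcross, mul_pow,
    Complex.norm_mul, Complex.norm_real, Complex.norm_I, mul_one, Real.norm_eq_abs, sq_abs]
  ring

lemma IsSymmetricOp.abs_mul_norm_le (hA : IsSymmetricOp D A) (t : ℝ) (u : ↥D) :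
    |t| * ‖(u : ℋ)‖ ≤ ‖shiftOp A t u‖ := by
  have h : (t * ‖(u : ℋ)‖) ^ 2 ≤ ‖shiftOp A t u‖ ^ 2 := by
    rw [hA.norm_shiftOp_sq]
    exact le_add_of_nonneg_left (sq_nonneg _)
  simpa [abs_mul] using abs_le_of_sq_le_sq h (norm_nonneg _)

lemma IsSelfAdjointOp.orthogonal_range_shiftOp (hA : IsSelfAdjointOp D A) {t : ℝ} (ht : t ≠ 0) :
    (LinearMap.range (shiftOp A t))ᗮ = ⊥ := by
  refine (Submodule.eq_bot_iff _).mpr fun v hv => ?_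
  have hperp : ∀ u : ↥D, inner ℂ (shiftOp A t u) v = 0 := fun u =>
    Submodule.inner_right_of_mem_orthogonal (LinearMap.mem_range_self _ u) hv
  -- `v` would be an eigenvector of `A` with the non-real eigenvalue `i t`
  obtain ⟨hvD, hAv⟩ := hA.mem_and_Aext_eq (v := v) (w := ((t : ℂ) * Complex.I) • v) fun u => by
    have h := hperp u
    rw [shiftOp_apply, inner_add_left, inner_smul_left] at h
    rw [inner_smul_right]
    simp only [map_mul, Complex.conj_ofReal, Complex.conj_I] at h
    linear_combination h
  have h := hperp ⟨v, hvD⟩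
  rw [shiftOp_apply, ← Aext_of_mem hvD, hAv, ← two_smul ℂ, smul_smul, inner_smul_left,
    mul_eq_zero, inner_self_eq_zero] at h
  simpa [ht] using h

end SelfAdjoint

section Resolvent

variable {D : Submodule ℂ ℋ} {A : ↥D →ₗ[ℂ] ℋ}

lemma IsSelfAdjointOp.add_of_isSelfAdjoint (hA : IsSelfAdjointOp D A) {B : ℋ →L[ℂ] ℋ}
    (hB : IsSelfAdjoint B) : IsSelfAdjointOp D (A + B.toLinearMap.comp D.subtype) := by
  have hBs : ∀ x y, inner ℂ (B x) y = inner ℂ x (B y) := hB.isSymmetric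
  refine ⟨hA.1, fun u v => ?_, fun v w h => hA.2.2 v (w - B v) fun u => ?_⟩
  · simp only [LinearMap.add_apply, LinearMap.comp_apply, Submodule.subtype_apply,
      ContinuousLinearMap.coe_coe, inner_add_left, inner_add_right, hA.2.1 u v, hBs]
  · have h := h u
    simp only [LinearMap.add_apply, LinearMap.comp_apply, Submodule.subtype_apply,
      ContinuousLinearMap.coe_coe, inner_add_left, hBs] at h
    rw [inner_sub_right, ← h, add_sub_cancel_right]

lemma IsSelfAdjointOp.isClosed_range_shiftOp (hA : IsSelfAdjointOp D A) {t : ℝ} (ht : t ≠ 0) :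
    IsClosed (LinearMap.range (shiftOp A t) : Set ℋ) := by
  refine IsSeqClosed.isClosed fun y z hy hyz => ?_
  choose u hu using fun m => LinearMap.mem_range.mp (hy m)
  have hlip : ∀ m l, ‖(u m : ℋ) - u l‖ ≤ |t|⁻¹ * ‖y m - y l‖ := fun m l => by
    rw [le_inv_mul_iff₀ (abs_pos.mpr ht), ← hu, ← hu, ← map_sub]
    exact hA.isSymmetricOp.abs_mul_norm_le t (u m - u l)
  have hcauchy : CauchySeq fun m => (u m : ℋ) := by
    refine Metric.cauchySeq_iff.mpr fun ε hε => ?_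
    obtain ⟨N, hN⟩ := Metric.cauchySeq_iff.mp hyz.cauchySeq (|t| * ε)
      (mul_pos (abs_pos.mpr ht) hε)
    refine ⟨N, fun m hm l hl => ?_⟩
    rw [dist_eq_norm]
    calc ‖(u m : ℋ) - u l‖ ≤ |t|⁻¹ * ‖y m - y l‖ := hlip m l
      _ < |t|⁻¹ * (|t| * ε) := by
          rw [← dist_eq_norm]
          exact mul_lt_mul_of_pos_left (hN m hm l hl) (inv_pos.mpr (abs_pos.mpr ht))
      _ = ε := inv_mul_cancel_left₀ (abs_pos.mpr ht).ne' ε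
  obtain ⟨w, hw⟩ := cauchySeq_tendsto_of_complete hcauchy
  have hAu : Tendsto (fun m => Aext D A (u m)) atTop (𝓝 (z - ((t : ℂ) * Complex.I) • w)) :=
    (hyz.sub (hw.const_smul _)).congr fun m => by
      rw [← hu, shiftOp_apply, Aext_coe, add_sub_cancel_right]
  obtain ⟨hwD, hAw⟩ := hA.mem_and_Aext_eq_of_tendsto (fun m => (u m).2) hw hAu
  exact ⟨⟨w, hwD⟩, by rw [shiftOp_apply, ← Aext_of_mem hwD, hAw, sub_add_cancel]⟩

lemma IsSelfAdjointOp.bijective_shiftOp (hA : IsSelfAdjointOp D A) {t : ℝ} (ht : t ≠ 0) :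
    Function.Bijective (shiftOp A t) := by
  refine ⟨(injective_iff_map_eq_zero _).mpr fun u hu => ?_, LinearMap.range_eq_top.mp ?_⟩
  · have h := hA.isSymmetricOp.abs_mul_norm_le t u
    rw [hu, norm_zero] at h
    have : ‖(u : ℋ)‖ = 0 :=
      le_antisymm (nonpos_of_mul_nonpos_right h (abs_pos.mpr ht)) (norm_nonneg _)
    exact Subtype.ext (norm_eq_zero.mp this)
  · rw [← (hA.isClosed_range_shiftOp ht).submodule_topologicalClosure_eq,
      Submodule.topologicalClosure_eq_top_iff]
    exact hA.orthogonal_range_shiftOp ht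

lemma IsSelfAdjointOp.exists_regularizer (hA : IsSelfAdjointOp D A) {t : ℝ} (ht : 0 < t) :
    ∃ J : ℋ →L[ℂ] ℋ, (∀ y, J y ∈ D) ∧ (∀ ξ ∈ D, Aext D A (J ξ) = J (Aext D A ξ)) ∧ ‖J‖ ≤ 1 ∧
      ∀ ξ ∈ D, ‖J ξ - ξ‖ ≤ t⁻¹ * ‖Aext D A ξ‖ := by
  set μ : ℂ := (t : ℂ) * Complex.I
  have hμ : ‖μ‖ = t := by simp [μ, ht.le]
  let e := LinearEquiv.ofBijective _ (hA.bijective_shiftOp ht.ne')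
  have he : ∀ y, shiftOp A t (e.symm y) = y := e.apply_symm_apply
  have hbound : ∀ y, ‖(D.subtype ∘ₗ e.symm.toLinearMap) y‖ ≤ t⁻¹ * ‖y‖ := fun y => by
    have h := hA.isSymmetricOp.abs_mul_norm_le t (e.symm y)
    rwa [abs_of_pos ht, he, ← le_inv_mul_iff₀ ht] at h
  -- `R = (A + μ)⁻¹` and `J = μ R`
  let R := (D.subtype ∘ₗ e.symm.toLinearMap).mkContinuous t⁻¹ hbound
  have hRD : ∀ y, R y ∈ D := fun y => (e.symm y).2
  have hAR : ∀ y, Aext D A (R y) + μ • R y = y := fun y => by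
    have h := he y
    rwa [shiftOp_apply, ← Aext_coe] at h
  have hRA : ∀ ξ ∈ D, R (Aext D A ξ) + μ • R ξ = ξ := fun ξ hξ => by
    rw [← map_smul, ← map_add, Aext_of_mem hξ]
    exact congrArg Subtype.val (e.symm_apply_apply ⟨ξ, hξ⟩)
  refine ⟨μ • R, fun y => D.smul_mem μ (hRD y), fun ξ hξ => ?_, ?_, fun ξ hξ => ?_⟩
  · rw [smul_apply, smul_apply, Aext_smul μ (hRD ξ), eq_sub_of_add_eq (hAR ξ),
      eq_sub_of_add_eq (hRA ξ hξ)]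
  · refine ContinuousLinearMap.opNorm_le_bound _ zero_le_one fun y => ?_
    rw [smul_apply, norm_smul, hμ, one_mul, ← le_inv_mul_iff₀ ht]
    exact hbound y
  · rw [smul_apply, show μ • R ξ - ξ = -R (Aext D A ξ) by
      rw [eq_sub_of_add_eq (hRA ξ hξ), neg_sub], norm_neg]
    exact hbound _

end Resolvent

section StrongConvergence

variable {𝕜 E F ι : Type*} [NontriviallyNormedField 𝕜] [NormedAddCommGroup E] [NormedSpace 𝕜 E]
  [NormedAddCommGroup F] [NormedSpace 𝕜 F] {l : Filter ι}

lemma tendsto_apply_of_dense {T : ι → E →L[𝕜] F} {C : ℝ} (hT : ∀ i, ‖T i‖ ≤ C)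
    {f : E →L[𝕜] F} {S : Set E} (hS : Dense S)
    (h : ∀ x ∈ S, Tendsto (fun i => T i x) l (𝓝 (f x))) (x : E) :
    Tendsto (fun i => T i x) l (𝓝 (f x)) := by
  have hT' : Equicontinuous fun i => (T i : E → F) :=
    ((NormedSpace.equicontinuous_TFAE T).out 5 1).mp (⟨C, hT⟩ : ∃ C, ∀ i, ‖T i‖ ≤ C)
  exact (hT'.isClosed_setOfPred_tendsto f.continuous).closure_subset_iff.mpr h (hS x)

lemma tendsto_iterate_apply {T : ι → E →L[𝕜] E} (hT : ∀ i, ‖T i‖ ≤ 1)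
    (h : ∀ x, Tendsto (fun i => T i x) l (𝓝 x)) (k : ℕ) (x : E) :
    Tendsto (fun i => (T i)^[k] x) l (𝓝 x) := by
  induction k with
  | zero => exact tendsto_const_nhds
  | succ k ih =>
    have hsmall : Tendsto (fun i => T i ((T i)^[k] x - x)) l (𝓝 0) :=
      squeeze_zero_norm (fun i => ((T i).le_of_opNorm_le (hT i) _).trans_eq (one_mul _))
        (tendsto_iff_norm_sub_tendsto_zero.mp ih)
    simpa [Function.iterate_succ_apply'] using hsmall.add (h x)

end StrongConvergence

section Commutators

variable {D : Submodule ℂ ℋ} {A : ↥D →ₗ[ℂ] ℋ}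

lemma IsSelfAdjointOp.exists_tendsto_domPow (hA : IsSelfAdjointOp D A) (k : ℕ) {ξ : ℋ}
    (hξ : ξ ∈ D) : ∃ u : ℕ → ℋ, (∀ m, u m ∈ domPow D A (k + 1)) ∧ Tendsto u atTop (𝓝 ξ) ∧
      Tendsto (fun m => Aext D A (u m)) atTop (𝓝 (Aext D A ξ)) := by
  choose J hJD hJA hJnorm hJclose using
    fun m : ℕ => hA.exists_regularizer (t := m + 1) m.cast_add_one_pos
  have hJ : ∀ y, Tendsto (fun m => J m y) atTop (𝓝 y) :=
    tendsto_apply_of_dense hJnorm (f := ContinuousLinearMap.id ℂ ℋ) hA.1 fun ξ hξ =>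
      tendsto_iff_norm_sub_tendsto_zero.mpr <| squeeze_zero (fun m => norm_nonneg _)
        (fun m => hJclose m ξ hξ) <| by
          simpa [one_div] using tendsto_one_div_add_atTop_nhds_zero_nat.mul_const ‖Aext D A ξ‖
  refine ⟨fun m => (⇑(J m))^[k] ξ, fun m => (iterate_mem_domPow (hJD m) (hJA m) k hξ).1,
    tendsto_iterate_apply hJnorm hJ k ξ, ?_⟩
  exact (tendsto_iterate_apply hJnorm hJ k _).congr fun m =>
    (iterate_mem_domPow (hJD m) (hJA m) k hξ).2.symm

lemma IsSelfAdjointOp.inner_ad_succ_eq (hA : IsSelfAdjointOp D A) {k : ℕ} {X Z Z' : ℋ →L[ℂ] ℋ}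
    (hZ : AdExistsN D A k X Z) (hZ' : AdExistsN D A (k + 1) X Z') :
    ∀ ξ ∈ D, ∀ η ∈ D,
      inner ℂ (Z' ξ) η = inner ℂ (Z ξ) (Aext D A η) - inner ℂ (Z (Aext D A ξ)) η := by
  have hdom : ∀ u ∈ domPow D A (k + 1), ∀ v ∈ domPow D A (k + 1),
      inner ℂ (Z' u) v = inner ℂ (Z u) (Aext D A v) - inner ℂ (Z (Aext D A u)) v :=
    fun u hu v hv => by
      rw [← hZ' u hu v hv, commForm_succ, hZ u (domPow_mono k.le_succ hu) _
        (mem_domPow_succ_iff.mp hv).2, hZ _ (mem_domPow_succ_iff.mp hu).2 v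
        (domPow_mono k.le_succ hv)]
  intro ξ hξ η hη
  obtain ⟨u, hu, huξ, hAu⟩ := hA.exists_tendsto_domPow k hξ
  obtain ⟨v, hv, hvη, hAv⟩ := hA.exists_tendsto_domPow k hη
  refine tendsto_nhds_unique (((Z'.continuous.tendsto ξ).comp huξ).inner hvη) ?_
  exact ((((Z.continuous.tendsto ξ).comp huξ).inner hAv).sub
    (((Z.continuous.tendsto _).comp hAu).inner hvη)).congr fun m => (hdom _ (hu m) _ (hv m)).symm

lemma IsSelfAdjointOp.isCommChain (hA : IsSelfAdjointOp D A) {n : ℕ} {X : ℋ →L[ℂ] ℋ}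
    {Z : ℕ → ℋ →L[ℂ] ℋ} (hZ : ∀ k ≤ n, AdExistsN D A k X (Z k)) : IsCommChain D A n Z :=
  fun k hk => hA.commutator_eq_of_inner (hA.inner_ad_succ_eq (hZ k hk.le) (hZ (k + 1) hk))

lemma InCn.exists_isCommChain (hA : IsSelfAdjointOp D A) {n : ℕ} {X : ℋ →L[ℂ] ℋ}
    (hX : InCn D A n X) : ∃ c, IsCommChain D A n c ∧ c 0 = X := by
  choose! c hc using hX
  exact ⟨c, hA.isCommChain hc, adExistsN_zero (hc 0 n.zero_le)⟩

lemma inCnUniform_iff_exists_isCommChain (hA : IsSelfAdjointOp D A) {n : ℕ}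
    {X : ℝ → ℋ →L[ℂ] ℋ} : InCnUniform D A n X ↔
      ∃ M : ℝ, ∀ t, ∃ c, IsCommChain D A n c ∧ c 0 = X t ∧ ∀ k ≤ n, ‖c k‖ ≤ M := by
  constructor
  · rintro ⟨M, hM⟩
    refine ⟨M, fun t => ?_⟩
    choose! c hc using hM t
    exact ⟨c, hA.isCommChain fun k hk => (hc k hk).1, adExistsN_zero (hc 0 n.zero_le).1,
      fun k hk => (hc k hk).2⟩
  · rintro ⟨M, hM⟩
    refine ⟨M, fun t k hk => ?_⟩
    obtain ⟨c, hc, hc0, hcM⟩ := hM t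
    exact ⟨c k, hc0 ▸ hc.adExistsN hA.isSymmetricOp k hk, hcM k hk⟩

lemma InCnUniform.of_add {A₂ : ↥D →ₗ[ℂ] ℋ} (hA : IsSelfAdjointOp D A)
    (hA₂ : IsSelfAdjointOp D A₂) {n : ℕ} {b : ℕ → ℋ →L[ℂ] ℋ}
    (hrel : ∀ ξ ∈ D, Aext D A₂ ξ = Aext D A ξ + b 0 ξ) (hb : IsCommChain D A (n - 1) b)
    {X : ℝ → ℋ →L[ℂ] ℋ} (hX : InCnUniform D A n X) : InCnUniform D A₂ n X := by
  obtain ⟨M, hM⟩ := (inCnUniform_iff_exists_isCommChain hA).mp hX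
  set β := ∑ i ∈ Finset.range (n + 1), ‖b i‖
  have hβ : ∀ i ≤ n, ‖b i‖ ≤ β := fun i hi =>
    Finset.single_le_sum (fun j _ => norm_nonneg (b j)) (Finset.mem_range_succ_iff.mpr hi)
  set L := 1 + 2 ^ (n + 1) * β
  have hL : 1 ≤ L := le_add_of_nonneg_right (by positivity)
  refine (inCnUniform_iff_exists_isCommChain hA₂).mpr ⟨M * L ^ n, fun t => ?_⟩
  obtain ⟨c, hc, hc0, hcM⟩ := hM t
  refine ⟨_, isCommChain_perturbChain hrel hb hc, hc0, fun k hk => ?_⟩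
  calc ‖perturbChain b c k 0‖ ≤ M * L ^ k := norm_perturbChain_le hβ hcM k hk 0 (Nat.zero_le _)
    _ ≤ M * L ^ n := mul_le_mul_of_nonneg_left (pow_le_pow_right₀ hL hk)
        ((norm_nonneg _).trans (hcM 0 n.zero_le))

end Commutators

theorem stmt_15_general {ℋ : Type*} [NormedAddCommGroup ℋ] [InnerProductSpace ℂ ℋ] [CompleteSpace ℋ]
    (D : Submodule ℂ ℋ) (Aop : ↥D →ₗ[ℂ] ℋ) (hA : IsSelfAdjointOp D Aop)
    (p : ℕ) (B : ℋ →L[ℂ] ℋ) (hBsa : IsSelfAdjoint B)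
    (hBC : InCn D Aop (p - 1) B) (X : ℝ → ℋ →L[ℂ] ℋ) :
    IsSelfAdjointOp D (Aop + B.toLinearMap.comp D.subtype) ∧
      (InCnUniform D Aop p X ↔ InCnUniform D (Aop + B.toLinearMap.comp D.subtype) p X) := by
  have hA₂ := hA.add_of_isSelfAdjoint hBsa
  have hrel : ∀ ξ ∈ D, Aext D (Aop + B.toLinearMap.comp D.subtype) ξ = Aext D Aop ξ + B ξ :=
    fun ξ hξ => Aext_add_comp_subtype hξ
  obtain ⟨b, hb, rfl⟩ := hBC.exists_isCommChain hA
  -- the chain of `B` itself with respect to `A + B`, negated: `A = (A + B) + (-B)`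
  have hb₂ := (isCommChain_perturbChain hrel (hb.mono (Nat.sub_le _ 1)) hb).neg
  have hrel₂ : ∀ ξ ∈ D, Aext D Aop ξ =
      Aext D (Aop + (b 0).toLinearMap.comp D.subtype) ξ + (-perturbChain b b 0 0) ξ :=
    fun ξ hξ => by rw [hrel ξ hξ, perturbChain, neg_apply, add_neg_cancel_right]
  exact ⟨hA₂, InCnUniform.of_add hA hA₂ hrel hb, InCnUniform.of_add hA₂ hA hrel₂ hb₂⟩

/-- if `A` is self-adjoint and `B ∈ C_{p−1}(A)` is bounded Hermitian, then
`A + B` (with domain `Dom A`) is self-adjoint, and an operator-valued function `X(t)` is in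
`C_p(A)` uniformly iff it is in `C_p(A+B)` uniformly. -/
theorem stmt_15 {ℋ : Type*} [NormedAddCommGroup ℋ] [InnerProductSpace ℂ ℋ] [CompleteSpace ℋ]
    (D : Submodule ℂ ℋ) (Aop : ↥D →ₗ[ℂ] ℋ) (hA : IsSelfAdjointOp D Aop)
    (p : ℕ) (hp : 0 < p) (B : ℋ →L[ℂ] ℋ) (hBsa : IsSelfAdjoint B)
    (hBC : InCn D Aop (p - 1) B) (X : ℝ → ℋ →L[ℂ] ℋ) :
    IsSelfAdjointOp D (Aop + B.toLinearMap.comp D.subtype) ∧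
      (InCnUniform D Aop p X ↔ InCnUniform D (Aop + B.toLinearMap.comp D.subtype) p X) :=
  stmt_15_general D Aop hA p B hBsa hBC X
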